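/- The bijection P preserves the positions of left-to-right maxima and of right-to-left maxima: for every 231-avoiding permutation π, an index i is a position of a left-to-right (resp. right-to-left) maximum of π if and only if it is one of P(π). -/

import Mathlib

/-- Stack sorting with fuel (fuel = length always suffices). -/
def stackSortAux : ℕ → List ℕ → List ℕ
  | 0, _ => []
  | _ + 1, [] => []
  | fuel + 1, x :: xs =>
    let l := x :: xs
    let m := l.foldr max 0
    stackSortAux fuel (l.takeWhile (· ≠ m)) ++
      stackSortAux fuel ((l.dropWhile (· ≠ m)).tail) ++ [m]

/-- The stack sorting operator `S`: `S(ε) = ε` and `S(α n β) = S(α) S(β) n`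
where `n` is the maximum element. -/
def stackSort (l : List ℕ) : List ℕ := stackSortAux l.length l

/-- `σ` avoids the pattern 231. -/
def Avoids231 (σ : List ℕ) : Prop :=
  ¬ ∃ i j k, i < j ∧ j < k ∧ k < σ.length ∧
      σ.getD k 0 < σ.getD i 0 ∧ σ.getD i 0 < σ.getD j 0

/-- `σ` avoids the pattern 132. -/
def Avoids132 (σ : List ℕ) : Prop :=
  ¬ ∃ i j k, i < j ∧ j < k ∧ k < σ.length ∧
      σ.getD i 0 < σ.getD k 0 ∧ σ.getD k 0 < σ.getD j 0

/-- Binary trees with natural number labels. -/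
inductive BTree where
  | leaf : BTree
  | node : BTree → ℕ → BTree → BTree

def BTree.inorder : BTree → List ℕ
  | .leaf => []
  | .node l n r => l.inorder ++ [n] ++ r.inorder

def BTree.postorder : BTree → List ℕ
  | .leaf => []
  | .node l n r => l.postorder ++ r.postorder ++ [n]

/-- A tree is decreasing when labels strictly decrease from root to leaves. -/
def BTree.Decreasing : BTree → Prop
  | .leaf => True
  | .node l n r =>
      l.Decreasing ∧ r.Decreasing ∧
      (∀ x ∈ l.inorder, x < n) ∧ (∀ x ∈ r.inorder, x < n)

/-- The underlying unlabeled shape of a tree (labels replaced by `0`). -/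
def BTree.shape : BTree → BTree
  | .leaf => .leaf
  | .node l _ r => .node l.shape 0 r.shape

def BTree.map (f : ℕ → ℕ) : BTree → BTree
  | .leaf => .leaf
  | .node l n r => .node (l.map f) (f n) (r.map f)

/-- Labels on the rightmost branch from the root. -/
def BTree.rightBranch : BTree → List ℕ
  | .leaf => []
  | .node _ n r => n :: r.rightBranch

/-- Labels on the leftmost branch from the root. -/
def BTree.leftBranch : BTree → List ℕ
  | .leaf => []
  | .node l n _ => n :: l.leftBranch

def TinAux : ℕ → List ℕ → BTree
  | 0, _ => .leaf
  | _ + 1, [] => .leaf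
  | fuel + 1, x :: xs =>
    let l := x :: xs
    let m := l.foldr max 0
    .node (TinAux fuel (l.takeWhile (· ≠ m))) m
          (TinAux fuel ((l.dropWhile (· ≠ m)).tail))

/-- The decreasing binary tree whose in-order reading is `l`. -/
def Tin (l : List ℕ) : BTree := TinAux l.length l

def PpermAux : ℕ → List ℕ → List ℕ
  | 0, _ => []
  | _ + 1, [] => []
  | fuel + 1, x :: xs =>
    let l := x :: xs
    let m := l.foldr max 0
    let α := l.takeWhile (· ≠ m)
    let β := (l.dropWhile (· ≠ m)).tail
    (PpermAux fuel α).map (· + β.length) ++ [m] ++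
      PpermAux fuel (β.map (· - α.length))

/-- The bijection `P` from 231-avoiding to 132-avoiding permutations,
`P(ε) = ε` and `P(α ⊕ (1 ⊖ β)) = (P(α) ⊕ 1) ⊖ P(β)`. -/
def Pperm (l : List ℕ) : List ℕ := PpermAux l.length l

/-- Direct sum of permutations: `α ⊕ β`. -/
def osum (α β : List ℕ) : List ℕ := α ++ β.map (· + α.length)

/-- Skew sum of permutations: `α ⊖ β`. -/
def ossum (α β : List ℕ) : List ℕ := α.map (· + β.length) ++ β

def lrP : ℕ → List ℕ × List ℕ
  | 0 => ([], [])
  | m + 1 => (ossum [1] (lrP m).2, osum (lrP m).1 [1])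

/-- `λ_n`: `λ_{m+1} = 1 ⊖ ρ_m`. -/
def lamP (n : ℕ) : List ℕ := (lrP n).1

/-- `ρ_n`: `ρ_{m+1} = λ_m ⊕ 1`. -/
def rhoP (n : ℕ) : List ℕ := (lrP n).2

/-- `s` and `p` are order isomorphic lists. -/
def OrderIsoList (s p : List ℕ) : Prop :=
  s.length = p.length ∧
  ∀ i j, i < s.length → j < s.length →
    (s.getD i 0 < s.getD j 0 ↔ p.getD i 0 < p.getD j 0)

/-- `σ` contains the pattern `π`. -/
def Contains (σ π : List ℕ) : Prop :=
  ∃ s : List ℕ, s.Sublist σ ∧ OrderIsoList s π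

/-- The up-down word of a permutation (`true` = ascent `u`, `false` = descent `d`). -/
def updown (l : List ℕ) : List Bool :=
  (l.zip l.tail).map (fun p => decide (p.1 < p.2))

/-- No value larger than `max x y` occurs (strictly) between `x` and `y` in `l`. -/
def NoLargerBetween (l : List ℕ) (x y : ℕ) : Prop :=
  ∀ i j k, i < j → j < k → k < l.length →
    ((l.getD i 0 = x ∧ l.getD k 0 = y) ∨ (l.getD i 0 = y ∧ l.getD k 0 = x)) →
    l.getD j 0 ≤ max x y

/-- The basic operators: stack sorting `S` and reversal `R`. -/
inductive SOp where
  | s : SOp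
  | r : SOp

def applyOp : SOp → List ℕ → List ℕ
  | .s => stackSort
  | .r => List.reverse

/-- A composition of operators from `{S, R}`. -/
def applyOps (ops : List SOp) : List ℕ → List ℕ :=
  ops.foldr (fun op f => applyOp op ∘ f) id

/-- `i` is the position of a left-to-right maximum of `l`. -/
def LRmaxPos (l : List ℕ) (i : ℕ) : Prop :=
  i < l.length ∧ ∀ j, j < i → l.getD j 0 < l.getD i 0

/-- `i` is the position of a right-to-left maximum of `l`. -/
def RLmaxPos (l : List ℕ) (i : ℕ) : Prop :=
  i < l.length ∧ ∀ j, i < j → j < l.length → l.getD j 0 < l.getD i 0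

/-- The reverse Zeilberger statistic: the largest `k` such that
`(n-k+1) … (n-1) n` is a subword of `l`, where `n = l.length`. -/
noncomputable def Rzeil (l : List ℕ) : ℕ :=
  sSup {k | (List.range' (l.length - k + 1) k).Sublist l}

/-! A nonempty 231-avoiding permutation `π` of `[1, n]` splits at its maximum as `π = α n β'`,
and every entry of `α` is below every entry of `β'` (a larger one would form a 231 with `n`).
Hence `π = α ⊕ (1 ⊖ β)` with `α`, `β` again 231-avoiding permutations, and
`P(π) = (P(α) ⊕ 1) ⊖ P(β)` also has `n` at position `|α|`. As `n` exceeds all other entries, in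
both lists the left-to-right maxima are those of the left block together with `|α|`, and the
right-to-left maxima are `|α|` together with those of the right block. Adding a constant to a
block changes neither, so induction on `α` and `β` concludes. -/

open List

theorem List.takeWhile_append_cons_tail_dropWhile {α : Type*} [DecidableEq α] {a : α} :
    ∀ {l : List α}, a ∈ l → l.takeWhile (· ≠ a) ++ a :: (l.dropWhile (· ≠ a)).tail = l
  | x :: xs, h => by
    by_cases hx : x = a
    · simp [hx]
    · have hxs : a ∈ xs := by simpa [Ne.symm hx] using h
      rw [takeWhile_cons_of_pos (by simpa using hx), dropWhile_cons_of_pos (by simpa using hx),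
        cons_append, takeWhile_append_cons_tail_dropWhile hxs]

theorem List.getD_mem {α : Type*} {l : List α} {i : ℕ} (hi : i < l.length) (d : α) :
    l.getD i d ∈ l := by
  rw [getD_eq_getElem _ _ hi]
  exact getElem_mem hi

theorem List.getD_map_of_lt {α β : Type*} {l : List α} (f : α → β) {i : ℕ} (hi : i < l.length)
    (d : β) (d' : α) : (l.map f).getD i d = f (l.getD i d') := by
  rw [getD_eq_getElem _ _ (by simpa using hi), getD_eq_getElem _ _ hi, getElem_map]

theorem List.getD_append_length_add {α : Type*} (u v : List α) (i : ℕ) (d : α) :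
    (u ++ v).getD (u.length + i) d = v.getD i d := by
  rw [getD_append_right _ _ _ _ (by omega), Nat.add_sub_cancel_left]

theorem List.getD_append_cons_of_length_lt {α : Type*} {u v : List α} {n : α} {i : ℕ}
    (hi : u.length < i) (d : α) : (u ++ n :: v).getD i d = v.getD (i - u.length - 1) d := by
  obtain ⟨k, rfl⟩ := Nat.exists_eq_add_of_lt hi
  rw [getD_append_right _ _ _ _ hi.le, Nat.add_assoc, Nat.add_sub_cancel_left, getD_cons_succ,
    Nat.add_sub_cancel]

theorem List.foldr_max_mem_of_ne_nil {l : List ℕ} (hl : l ≠ []) : l.foldr max 0 ∈ l :=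
  maximum_mem (foldr_max_of_ne_nil hl).symm

theorem List.foldr_max_eq_of_mem {l : List ℕ} {n : ℕ} (hn : n ∈ l) (hle : ∀ x ∈ l, x ≤ n) :
    l.foldr max 0 = n :=
  le_antisymm (max_le_of_forall_le l n hle) (le_max_of_le hn le_rfl)

theorem List.le_of_mem_of_perm_range' {l : List ℕ} {k x : ℕ} (hl : l ~ range' 1 k) (hx : x ∈ l) :
    x ≤ k := by
  have := mem_range'_1.1 (hl.subset hx)
  omega

theorem List.perm_range'_of_append_perm_range' {l₁ l₂ : List ℕ} {s : ℕ}
    (h : l₁ ++ l₂ ~ range' s (l₁.length + l₂.length)) (hle : ∀ a ∈ l₁, ∀ b ∈ l₂, a ≤ b) :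
    l₁ ~ range' s l₁.length ∧ l₂ ~ range' (s + l₁.length) l₂.length := by
  -- sorting `l₁` and `l₂` separately sorts `l₁ ++ l₂`, so it produces the two halves of the range
  have hsorted : (l₁.mergeSort ++ l₂.mergeSort).Pairwise (· ≤ ·) :=
    pairwise_append.2 ⟨pairwise_mergeSort' _ _, pairwise_mergeSort' _ _, fun a ha b hb =>
      hle a ((mergeSort_perm _ _).subset ha) b ((mergeSort_perm _ _).subset hb)⟩
  have heq : l₁.mergeSort ++ l₂.mergeSort =
      range' s l₁.length ++ range' (s + l₁.length) l₂.length := by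
    rw [range'_append_1]
    exact (((mergeSort_perm _ _).append (mergeSort_perm _ _)).trans h).eq_of_pairwise' hsorted
      (pairwise_le_range' 1)
  obtain ⟨h₁, h₂⟩ := append_inj heq (by simp)
  exact ⟨h₁ ▸ (mergeSort_perm _ _).symm, h₂ ▸ (mergeSort_perm _ _).symm⟩

theorem Avoids231.of_append_left {u v : List ℕ} (h : Avoids231 (u ++ v)) : Avoids231 u := by
  rintro ⟨i, j, k, hij, hjk, hk, h₁, h₂⟩
  refine h ⟨i, j, k, hij, hjk, by simp; omega, ?_, ?_⟩ <;>
    rwa [getD_append _ _ _ _ (by omega), getD_append _ _ _ _ (by omega)]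

theorem Avoids231.of_append_right {u v : List ℕ} (h : Avoids231 (u ++ v)) : Avoids231 v := by
  rintro ⟨i, j, k, hij, hjk, hk, h₁, h₂⟩
  refine h ⟨u.length + i, u.length + j, u.length + k, by omega, by omega, by simp; omega, ?_, ?_⟩
    <;> rwa [getD_append_length_add, getD_append_length_add]

theorem Avoids231.of_map {l : List ℕ} {f : ℕ → ℕ} (hf : StrictMono f) (h : Avoids231 (l.map f)) :
    Avoids231 l := by
  rintro ⟨i, j, k, hij, hjk, hk, h₁, h₂⟩
  refine h ⟨i, j, k, hij, hjk, by simpa using hk, ?_, ?_⟩ <;>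
    rw [getD_map_of_lt f (by omega) 0 0, getD_map_of_lt f (by omega) 0 0] <;>
    exact hf ‹_›

theorem Avoids231.le_of_mem_of_mem {u v : List ℕ} {n a c : ℕ} (h : Avoids231 (u ++ n :: v))
    (ha : a ∈ u) (han : a < n) (hc : c ∈ v) : a ≤ c := by
  by_contra! hca
  obtain ⟨i, hi, rfl⟩ := getElem_of_mem ha
  obtain ⟨k, hk, rfl⟩ := getElem_of_mem hc
  refine h ⟨i, u.length, u.length + (k + 1), hi, by omega, by simp; omega, ?_, ?_⟩
  · rwa [getD_append_length_add, getD_cons_succ, getD_append _ _ _ _ hi, getD_eq_getElem,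
      getD_eq_getElem]
  · rwa [getD_append _ _ _ _ hi, getD_eq_getElem, show (u ++ n :: v).getD u.length 0 = n by simp]

theorem Avoids231.exists_eq_append_cons_map_add {π : List ℕ} (hπ : π ~ range' 1 π.length)
    (hne : π ≠ []) (hav : Avoids231 π) :
    ∃ α β : List ℕ, π = α ++ (α.length + β.length + 1) :: β.map (· + α.length) ∧
      α ~ range' 1 α.length ∧ β ~ range' 1 β.length ∧ Avoids231 α ∧ Avoids231 β := by
  obtain ⟨α, γ, hsplit⟩ :=
    append_of_mem (hπ.mem_iff.2 (by simp [Nat.one_le_iff_ne_zero, hne]) : π.length ∈ π)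
  have hn : π.length = α.length + γ.length + 1 := by
    simpa [add_assoc] using congrArg length hsplit
  rw [hn] at hsplit hπ
  subst hsplit
  set n := α.length + γ.length + 1
  have hlt : ∀ a ∈ α, a < n := fun a ha => by
    have hle := (mem_range'_1.1 (hπ.subset (mem_append_left _ ha))).2
    have hne : a ≠ n := fun han =>
      (nodup_append.1 (hπ.nodup_iff.2 nodup_range')).2.2 a ha a (by simp [han]) rfl
    omega
  have hperm : α ++ γ ~ range' 1 (α.length + γ.length) := by
    refine perm_cons n |>.1 (perm_middle.symm.trans (hπ.trans ?_))
    rw [range'_1_concat, add_comm 1]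
    exact perm_append_singleton _ _
  obtain ⟨hα, hγ⟩ := perm_range'_of_append_perm_range' hperm
    fun a ha c hc => hav.le_of_mem_of_mem ha (hlt a ha) hc
  have hγ_eq : (γ.map (· - α.length)).map (· + α.length) = γ := by
    rw [map_map]
    refine (map_congr_left fun c hc => ?_).trans (map_id γ)
    have := (mem_range'_1.1 (hγ.subset hc)).1
    simp only [Function.comp_apply, id_eq]
    omega
  refine ⟨α, γ.map (· - α.length), ?_, hα, ?_, hav.of_append_left, ?_⟩
  · rw [hγ_eq]; simp [n]
  · rw [length_map]
    simpa [map_sub_range'] using hγ.map (· - α.length)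
  · refine Avoids231.of_map (add_left_strictMono (a := α.length)) ?_
    rw [hγ_eq]
    exact (by simpa using hav : Avoids231 ((α ++ [n]) ++ γ)).of_append_right

@[elab_as_elim]
theorem Avoids231.perm_induction {motive : List ℕ → Prop} (nil : motive [])
    (append_cons : ∀ α β : List ℕ, α ~ range' 1 α.length → β ~ range' 1 β.length →
      Avoids231 α → Avoids231 β → motive α → motive β →
      motive (α ++ (α.length + β.length + 1) :: β.map (· + α.length)))
    (π : List ℕ) (hπ : π ~ range' 1 π.length) (hav : Avoids231 π) : motive π := by
  induction h : π.length using Nat.strong_induction_on generalizing π with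
  | _ n ih =>
    rcases eq_or_ne π [] with rfl | hne
    · exact nil
    obtain ⟨α, β, rfl, hα, hβ, havα, havβ⟩ := hav.exists_eq_append_cons_map_add hπ hne
    simp only [length_append, length_cons, length_map] at h
    exact append_cons α β hα hβ havα havβ (ih _ (by omega) α hα havα rfl)
      (ih _ (by omega) β hβ havβ rfl)

theorem PpermAux_eq_of_length_le {f g : ℕ} {l : List ℕ} (hf : l.length ≤ f) (hg : l.length ≤ g) :
    PpermAux f l = PpermAux g l := by
  induction f generalizing g l with
  | zero => rw [length_eq_zero_iff.1 (by omega : l.length = 0)]; cases g <;> rfl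
  | succ f ih =>
    match l, g with
    | [], g => cases g <;> rfl
    | x :: xs, 0 => simp at hg
    | x :: xs, g + 1 =>
      have hsplit := congrArg length <|
        takeWhile_append_cons_tail_dropWhile (foldr_max_mem_of_ne_nil (cons_ne_nil x xs))
      simp only [length_append, length_cons] at hsplit hf hg
      simp only [PpermAux]
      congr 1
      · congr 2
        exact ih (by omega) (by omega)
      · exact ih (by rw [length_map]; omega) (by rw [length_map]; omega)

theorem PpermAux_eq_Pperm {f : ℕ} {l : List ℕ} (h : l.length ≤ f) : PpermAux f l = Pperm l :=
  PpermAux_eq_of_length_le h le_rfl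

-- `P(α ⊕ (1 ⊖ β)) = (P(α) ⊕ 1) ⊖ P(β)` with the direct and skew sums written out
theorem Pperm_append_cons_map_add {α β : List ℕ} (hα : ∀ a ∈ α, a ≤ α.length)
    (hβ : ∀ b ∈ β, b ≤ β.length) :
    Pperm (α ++ (α.length + β.length + 1) :: β.map (· + α.length)) =
      (Pperm α).map (· + β.length) ++ (α.length + β.length + 1) :: Pperm β := by
  set n := α.length + β.length + 1
  set γ := β.map (· + α.length)
  have hαn : ∀ a ∈ α, a ≠ n := fun a ha => by have := hα a ha; omega
  have hγn : ∀ c ∈ γ, c ≤ n := forall_mem_map.2 fun b hb => by have := hβ b hb; omega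
  have hmax : (α ++ n :: γ).foldr max 0 = n := by
    refine foldr_max_eq_of_mem (by simp) fun x hx => ?_
    rcases mem_append.1 hx with hx | hx
    · have := hα x hx; omega
    · rcases mem_cons.1 hx with rfl | hx
      exacts [le_rfl, hγn x hx]
  have htake : (α ++ n :: γ).takeWhile (· ≠ n) = α := by
    rw [takeWhile_append_of_pos (by simpa using hαn), takeWhile_cons_of_neg (by simp), append_nil]
  have hdrop : ((α ++ n :: γ).dropWhile (· ≠ n)).tail = γ := by
    rw [dropWhile_append_of_pos (by simpa using hαn), dropWhile_cons_of_neg (by simp), tail_cons]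
  have hγβ : γ.map (· - α.length) = β := by simp [γ, map_map, Function.comp_def]
  obtain ⟨x, xs, hl⟩ := exists_cons_of_ne_nil (by simp : α ++ n :: γ ≠ [])
  have hlen : xs.length = α.length + β.length := by
    have := congrArg length hl; simp [γ] at this; omega
  rw [Pperm, hl, length_cons]
  simp only [PpermAux]
  rw [← hl, hmax, htake, hdrop, hγβ, length_map, PpermAux_eq_Pperm (by omega),
    PpermAux_eq_Pperm (by omega), append_assoc, singleton_append]

theorem Pperm_perm_range' (π : List ℕ) (hπ : π ~ range' 1 π.length) (hav : Avoids231 π) :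
    Pperm π ~ range' 1 π.length := by
  refine Avoids231.perm_induction (by rfl) (fun α β hα hβ _ _ ihα ihβ => ?_) π hπ hav
  rw [Pperm_append_cons_map_add (fun _ => le_of_mem_of_perm_range' hα)
    (fun _ => le_of_mem_of_perm_range' hβ)]
  have hlen : (α ++ (α.length + β.length + 1) :: β.map (· + α.length)).length =
      β.length + α.length + 1 := by simp; omega
  rw [hlen, range'_1_concat, ← range'_append_1]
  calc (Pperm α).map (· + β.length) ++ (α.length + β.length + 1) :: Pperm β
      ~ (range' 1 α.length).map (· + β.length) ++ (α.length + β.length + 1) :: range' 1 β.length :=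
        (ihα.map _).append (ihβ.cons _)
    _ = range' (1 + β.length) α.length ++ [α.length + β.length + 1] ++ range' 1 β.length := by
        simp [add_comm _ β.length, map_add_range']
    _ ~ range' 1 β.length ++ range' (1 + β.length) α.length ++ [1 + (β.length + α.length)] := by
        rw [append_assoc (range' 1 _),
          show 1 + (β.length + α.length) = α.length + β.length + 1 by omega]
        exact perm_append_comm

theorem LRmaxPos_map_iff {l : List ℕ} {f : ℕ → ℕ} (hf : StrictMono f) {i : ℕ} :
    LRmaxPos (l.map f) i ↔ LRmaxPos l i := by
  rw [LRmaxPos, LRmaxPos, length_map]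
  refine and_congr_right fun hi => forall₂_congr fun j hj => ?_
  rw [getD_map_of_lt f (hj.trans hi) 0 0, getD_map_of_lt f hi 0 0, hf.lt_iff_lt]

theorem RLmaxPos_map_iff {l : List ℕ} {f : ℕ → ℕ} (hf : StrictMono f) {i : ℕ} :
    RLmaxPos (l.map f) i ↔ RLmaxPos l i := by
  rw [RLmaxPos, RLmaxPos, length_map]
  refine and_congr_right fun hi => forall₃_congr fun j _ hj => ?_
  rw [getD_map_of_lt f hj 0 0, getD_map_of_lt f hi 0 0, hf.lt_iff_lt]

theorem LRmaxPos_append_cons_iff {u v : List ℕ} {n i : ℕ} (hu : ∀ x ∈ u, x < n)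
    (hv : ∀ x ∈ v, x < n) : LRmaxPos (u ++ n :: v) i ↔ LRmaxPos u i ∨ i = u.length := by
  have hlen : (u ++ n :: v).length = u.length + v.length + 1 := by simp; omega
  have hmid : (u ++ n :: v).getD u.length 0 = n := by simp
  rw [LRmaxPos, LRmaxPos, hlen]
  rcases lt_trichotomy i u.length with hi | rfl | hi
  · have hprefix : ∀ j ≤ i, (u ++ n :: v).getD j 0 = u.getD j 0 := fun j hj =>
      getD_append _ _ _ _ (by omega)
    rw [hprefix i le_rfl]
    constructor
    · rintro ⟨-, h⟩
      exact Or.inl ⟨hi, fun j hj => by rw [← hprefix j hj.le]; exact h j hj⟩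
    · rintro (⟨-, h⟩ | h)
      · exact ⟨by omega, fun j hj => by rw [hprefix j hj.le]; exact h j hj⟩
      · omega
  · refine iff_of_true ⟨by omega, fun j hj => ?_⟩ (Or.inr rfl)
    rw [hmid, getD_append _ _ _ _ hj]
    exact hu _ (getD_mem hj 0)
  · refine iff_of_false (fun ⟨hilen, h⟩ => ?_) (by rintro (⟨h, -⟩ | h) <;> omega)
    have hni := h u.length hi
    rw [hmid, getD_append_cons_of_length_lt hi] at hni
    exact (hv _ (getD_mem (by omega) 0)).not_gt hni

theorem RLmaxPos_append_cons_iff {u v : List ℕ} {n i : ℕ} (hu : ∀ x ∈ u, x < n)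
    (hv : ∀ x ∈ v, x < n) :
    RLmaxPos (u ++ n :: v) i ↔ i = u.length ∨ u.length < i ∧ RLmaxPos v (i - u.length - 1) := by
  have hlen : (u ++ n :: v).length = u.length + v.length + 1 := by simp; omega
  have hmid : (u ++ n :: v).getD u.length 0 = n := by simp
  rw [RLmaxPos, RLmaxPos, hlen]
  rcases lt_trichotomy i u.length with hi | rfl | hi
  · refine iff_of_false (fun ⟨_, h⟩ => ?_) (by rintro (h | ⟨h, -⟩) <;> omega)
    have hni := h u.length hi (by omega)
    rw [hmid, getD_append _ _ _ _ hi] at hni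
    exact (hu _ (getD_mem hi 0)).not_gt hni
  · refine iff_of_true ⟨by omega, fun j hj hjlen => ?_⟩ (Or.inl rfl)
    rw [hmid, getD_append_cons_of_length_lt hj]
    exact hv _ (getD_mem (by omega) 0)
  · rw [or_iff_right hi.ne', and_iff_right hi, getD_append_cons_of_length_lt hi]
    constructor
    · rintro ⟨hilen, h⟩
      refine ⟨by omega, fun j hj hjv => ?_⟩
      have hj' := h (u.length + 1 + j) (by omega) (by omega)
      rwa [getD_append_cons_of_length_lt (by omega),
        show u.length + 1 + j - u.length - 1 = j by omega] at hj'
    · rintro ⟨hilen, h⟩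
      refine ⟨by omega, fun j hj hjlen => ?_⟩
      rw [getD_append_cons_of_length_lt (by omega)]
      exact h _ (by omega) (by omega)

/-- `P` preserves the positions of left-to-right and of
right-to-left maxima. -/
theorem Pperm_preserves_maxima_positions :
    ∀ π : List ℕ, π.Perm (List.range' 1 π.length) → Avoids231 π →
      ∀ i : ℕ,
        (LRmaxPos π i ↔ LRmaxPos (Pperm π) i) ∧
        (RLmaxPos π i ↔ RLmaxPos (Pperm π) i) := by
  intro π hπ hav
  refine Avoids231.perm_induction (fun i => ⟨Iff.rfl, Iff.rfl⟩)
    (fun α β hα hβ havα havβ ihα ihβ i => ?_) π hπ hav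
  have hPα := Pperm_perm_range' α hα havα
  have hPβ := Pperm_perm_range' β hβ havβ
  have hαn : ∀ a ∈ α, a < α.length + β.length + 1 :=
    fun _ ha => (le_of_mem_of_perm_range' hα ha).trans_lt (by omega)
  have hβn : ∀ b ∈ β.map (· + α.length), b < α.length + β.length + 1 := forall_mem_map.2
    fun b hb => by have := le_of_mem_of_perm_range' hβ hb; omega
  have hPαn : ∀ a ∈ (Pperm α).map (· + β.length), a < α.length + β.length + 1 :=
    forall_mem_map.2 fun a ha => by have := le_of_mem_of_perm_range' hPα ha; omega
  have hPβn : ∀ b ∈ Pperm β, b < α.length + β.length + 1 :=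
    fun _ hb => (le_of_mem_of_perm_range' hPβ hb).trans_lt (by omega)
  have hPαlen : ((Pperm α).map (· + β.length)).length = α.length := by
    rw [length_map, hPα.length_eq, length_range']
  rw [Pperm_append_cons_map_add (fun _ => le_of_mem_of_perm_range' hα)
    (fun _ => le_of_mem_of_perm_range' hβ)]
  constructor
  · rw [LRmaxPos_append_cons_iff hαn hβn, LRmaxPos_append_cons_iff hPαn hPβn, hPαlen,
      LRmaxPos_map_iff add_left_strictMono, (ihα i).1]
  · rw [RLmaxPos_append_cons_iff hαn hβn, RLmaxPos_append_cons_iff hPαn hPβn, hPαlen,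
      RLmaxPos_map_iff add_left_strictMono, (ihβ _).2]
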